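/- arXiv:2110.01700 — 7 statements merged into one kernel-verified Lean document; each statement's English description precedes it below -/
import Mathlib

section
/- Let H ∈ ℂ^{n×m}, let H̄ ∈ ℂ^{m×m} be Hermitian with H̄ − I_m positive semidefinite, and let X, Y ∈ ℂ^{n×n} be Hermitian positive semidefinite. Then the matrices H̄ + Hᴴ X H and H̄ + Hᴴ Y H are invertible and ‖ H (H̄ + Hᴴ X H)⁻¹ Hᴴ − H (H̄ + Hᴴ Y H)⁻¹ Hᴴ ‖ ≤ λ_max(H Hᴴ)² · ‖X − Y‖. -/
open Matrix
open scoped ComplexOrder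

/-- Frobenius norm of a complex matrix. -/
noncomputable def frobNorm {a b : ℕ} (A : Matrix (Fin a) (Fin b) ℂ) : ℝ :=
  Real.sqrt (∑ i, ∑ j, ‖A i j‖ ^ 2)

/-- Largest eigenvalue of `H Hᴴ`. -/
noncomputable def lambdaMaxHHH {a b : ℕ} (H : Matrix (Fin a) (Fin b) ℂ) : ℝ :=
  ⨆ i, (Matrix.isHermitian_mul_conjTranspose_self H).eigenvalues i

/-!
Write `A = H̄ + Hᴴ X H` and `B = H̄ + Hᴴ Y H`. Both are `≥ 1` in the Loewner order, hence
invertible with `A⁻¹, B⁻¹ ≤ 1`, so `P_A = H A⁻¹ Hᴴ` and `P_B = H B⁻¹ Hᴴ` satisfy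
`0 ≤ P ≤ H Hᴴ ≤ λ_max(H Hᴴ)`: their operator norms are at most `λ_max(H Hᴴ)`. The resolvent
identity `A⁻¹ - B⁻¹ = A⁻¹ (B - A) B⁻¹` with `B - A = Hᴴ (Y - X) H` gives
`P_A - P_B = P_A (Y - X) P_B`, and `‖S M T‖_F ≤ ‖S‖_op ‖M‖_F ‖T‖_op` concludes.
-/

open scoped MatrixOrder Matrix.Norms.L2Operator

theorem frobNorm_sq {a b : ℕ} (A : Matrix (Fin a) (Fin b) ℂ) :
    frobNorm A ^ 2 = (Aᴴ * A).trace.re := by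
  rw [frobNorm, Real.sq_sqrt (by positivity), Matrix.trace, Finset.sum_comm]
  simp only [Matrix.diag, Matrix.mul_apply, Matrix.conjTranspose_apply, Complex.re_sum,
    Complex.star_def, ← Complex.normSq_eq_conj_mul_self, Complex.ofReal_re,
    Complex.normSq_eq_norm_sq]

theorem frobNorm_nonneg {a b : ℕ} (A : Matrix (Fin a) (Fin b) ℂ) : 0 ≤ frobNorm A :=
  Real.sqrt_nonneg _

theorem frobNorm_conjTranspose {a b : ℕ} (A : Matrix (Fin a) (Fin b) ℂ) :
    frobNorm Aᴴ = frobNorm A := by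
  simp only [frobNorm, Matrix.conjTranspose_apply, norm_star]
  rw [Finset.sum_comm]

theorem frobNorm_sub_rev {a b : ℕ} (A B : Matrix (Fin a) (Fin b) ℂ) :
    frobNorm (A - B) = frobNorm (B - A) := by
  simp only [frobNorm, Matrix.sub_apply, norm_sub_rev]

theorem frobNorm_mul_le_l2_opNorm_mul {k b : ℕ} (M : Matrix (Fin k) (Fin k) ℂ)
    (N : Matrix (Fin k) (Fin b) ℂ) : frobNorm (M * N) ≤ ‖M‖ * frobNorm N := by
  have hM : Mᴴ * M ≤ algebraMap ℝ _ (‖M‖ ^ 2) := CStarAlgebra.star_mul_le_algebraMap_norm_sq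
  have htrace := (le_iff.mp hM).conjTranspose_mul_mul_same N |>.trace_nonneg
  have hexpand : Nᴴ * (algebraMap ℝ _ (‖M‖ ^ 2) - Mᴴ * M) * N
      = ‖M‖ ^ 2 • (Nᴴ * N) - (M * N)ᴴ * (M * N) := by
    simp [Algebra.algebraMap_eq_smul_one, Matrix.mul_sub, Matrix.sub_mul, Matrix.mul_assoc]
  rw [hexpand, Matrix.trace_sub, Matrix.trace_smul, sub_nonneg] at htrace
  have hsq : frobNorm (M * N) ^ 2 ≤ (‖M‖ * frobNorm N) ^ 2 := by
    rw [frobNorm_sq, mul_pow, frobNorm_sq, ← smul_eq_mul, ← Complex.smul_re]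
    exact (Complex.le_def.mp htrace).1
  exact pow_le_pow_iff_left₀ (frobNorm_nonneg _)
    (mul_nonneg (norm_nonneg _) (frobNorm_nonneg _)) two_ne_zero |>.mp hsq

theorem frobNorm_mul_le_mul_l2_opNorm {k b : ℕ} (N : Matrix (Fin b) (Fin k) ℂ)
    (M : Matrix (Fin k) (Fin k) ℂ) : frobNorm (N * M) ≤ frobNorm N * ‖M‖ := by
  rw [← frobNorm_conjTranspose, Matrix.conjTranspose_mul, mul_comm, ← frobNorm_conjTranspose N,
    ← Matrix.l2_opNorm_conjTranspose M]
  exact frobNorm_mul_le_l2_opNorm_mul _ _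

theorem lambdaMaxHHH_nonneg {a b : ℕ} (H : Matrix (Fin a) (Fin b) ℂ) : 0 ≤ lambdaMaxHHH H :=
  Real.iSup_nonneg (posSemidef_self_mul_conjTranspose H).eigenvalues_nonneg

theorem mul_conjTranspose_self_le_lambdaMaxHHH {a b : ℕ} (H : Matrix (Fin a) (Fin b) ℂ) :
    H * Hᴴ ≤ algebraMap ℝ _ (lambdaMaxHHH H) := by
  have hH := isHermitian_mul_conjTranspose_self H
  rw [le_algebraMap_iff_spectrum_le hH.isSelfAdjoint, hH.spectrum_real_eq_range_eigenvalues]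
  rintro _ ⟨i, rfl⟩
  exact le_ciSup (Set.finite_range _).bddAbove i

theorem l2_opNorm_mul_inv_mul_conjTranspose_le {a b : ℕ} (H : Matrix (Fin a) (Fin b) ℂ)
    {A : Matrix (Fin b) (Fin b) ℂ} (hA : 1 ≤ A) : ‖H * A⁻¹ * Hᴴ‖ ≤ lambdaMaxHHH H := by
  have hA_pos : IsStrictlyPositive A := isStrictlyPositive_one.of_le hA
  have hinv_nonneg : 0 ≤ A⁻¹ := by
    rw [nonsing_inv_eq_ringInverse]; exact hA_pos.ringInverse.nonneg
  have hinv_le : A⁻¹ ≤ 1 := by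
    simpa [← nonsing_inv_eq_ringInverse] using CStarAlgebra.ringInverse_le_ringInverse hA
  have hconj_nonneg : 0 ≤ H * A⁻¹ * Hᴴ :=
    (hinv_nonneg.posSemidef.mul_mul_conjTranspose_same H).nonneg
  have hconj_le : H * A⁻¹ * Hᴴ ≤ H * Hᴴ := by
    simpa [le_iff, Matrix.mul_sub, Matrix.sub_mul] using
      (le_iff.mp hinv_le).mul_mul_conjTranspose_same H
  rw [CStarAlgebra.norm_le_iff_le_algebraMap _ (lambdaMaxHHH_nonneg H)]
  exact hconj_le.trans (mul_conjTranspose_self_le_lambdaMaxHHH H)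

theorem partial_gradient_lipschitz_general {n m : ℕ} (H : Matrix (Fin n) (Fin m) ℂ)
    (Hbar : Matrix (Fin m) (Fin m) ℂ)
    (hHbar : (Hbar - 1).PosSemidef)
    (X Y : Matrix (Fin n) (Fin n) ℂ) (hX : X.PosSemidef) (hY : Y.PosSemidef) :
    IsUnit (Hbar + Hᴴ * X * H) ∧ IsUnit (Hbar + Hᴴ * Y * H) ∧
    frobNorm (H * (Hbar + Hᴴ * X * H)⁻¹ * Hᴴ - H * (Hbar + Hᴴ * Y * H)⁻¹ * Hᴴ)
      ≤ lambdaMaxHHH H ^ 2 * frobNorm (X - Y) := by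
  have one_le {Z : Matrix (Fin n) (Fin n) ℂ} (hZ : Z.PosSemidef) : 1 ≤ Hbar + Hᴴ * Z * H :=
    le_add_of_le_of_nonneg (le_iff.mpr hHbar) (hZ.conjTranspose_mul_mul_same H).nonneg
  have hX_unit := CStarAlgebra.isUnit_of_le 1 (one_le hX)
  have hY_unit := CStarAlgebra.isUnit_of_le 1 (one_le hY)
  refine ⟨hX_unit, hY_unit, ?_⟩
  set A := Hbar + Hᴴ * X * H
  set B := Hbar + Hᴴ * Y * H
  have hdiff : H * A⁻¹ * Hᴴ - H * B⁻¹ * Hᴴ = (H * A⁻¹ * Hᴴ) * ((Y - X) * (H * B⁻¹ * Hᴴ)) := by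
    have hBA : B - A = Hᴴ * (Y - X) * H := by
      simp only [A, B, Matrix.mul_sub, Matrix.sub_mul]; abel
    rw [← Matrix.sub_mul, ← Matrix.mul_sub, inv_sub_inv (iff_of_true hX_unit hY_unit), hBA]
    simp only [Matrix.mul_assoc]
  calc frobNorm (H * A⁻¹ * Hᴴ - H * B⁻¹ * Hᴴ)
      ≤ ‖H * A⁻¹ * Hᴴ‖ * (frobNorm (Y - X) * ‖H * B⁻¹ * Hᴴ‖) := by
        rw [hdiff]
        refine (frobNorm_mul_le_l2_opNorm_mul _ _).trans ?_
        gcongr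
        exact frobNorm_mul_le_mul_l2_opNorm _ _
    _ ≤ lambdaMaxHHH H * (frobNorm (Y - X) * lambdaMaxHHH H) := by
        refine mul_le_mul (l2_opNorm_mul_inv_mul_conjTranspose_le H (one_le hX)) ?_
          (mul_nonneg (frobNorm_nonneg _) (norm_nonneg _)) (lambdaMaxHHH_nonneg H)
        exact mul_le_mul_of_nonneg_left (l2_opNorm_mul_inv_mul_conjTranspose_le H (one_le hY))
          (frobNorm_nonneg _)
    _ = lambdaMaxHHH H ^ 2 * frobNorm (X - Y) := by rw [frobNorm_sub_rev]; ring

/-- Let `H ∈ ℂ^{n×m}`, `H̄ ∈ ℂ^{m×m}` Hermitian with `H̄ − I` positive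
semidefinite, and `X, Y ∈ ℂ^{n×n}` Hermitian positive semidefinite. Then
`H̄ + Hᴴ X H` and `H̄ + Hᴴ Y H` are invertible and
`‖H (H̄ + Hᴴ X H)⁻¹ Hᴴ − H (H̄ + Hᴴ Y H)⁻¹ Hᴴ‖ ≤ λ_max(H Hᴴ)² ‖X − Y‖`
(Frobenius norms). -/
theorem partial_gradient_lipschitz {n m : ℕ} (H : Matrix (Fin n) (Fin m) ℂ)
    (Hbar : Matrix (Fin m) (Fin m) ℂ) (hHerm : Hbar.IsHermitian)
    (hHbar : (Hbar - 1).PosSemidef)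
    (X Y : Matrix (Fin n) (Fin n) ℂ) (hX : X.PosSemidef) (hY : Y.PosSemidef) :
    IsUnit (Hbar + Hᴴ * X * H) ∧ IsUnit (Hbar + Hᴴ * Y * H) ∧
    frobNorm (H * (Hbar + Hᴴ * X * H)⁻¹ * Hᴴ - H * (Hbar + Hᴴ * Y * H)⁻¹ * Hᴴ)
      ≤ lambdaMaxHHH H ^ 2 * frobNorm (X - Y) :=
  partial_gradient_lipschitz_general H Hbar hHbar X Y hX hY
end

section
/- Let K be a positive integer, μ > 0, P > 0, and H_k ∈ ℂ^{n_k×N_t} for k = 1,…,K. Let S̄_k ∈ ℂ^{n_k×n_k} be Hermitian positive semidefinite with Σ_{k=1}^K tr(S̄_k) = P. For each k set H̄_k = I_{N_t} + Σ_{j≠k} H_jᴴ S̄_j H_j (a Hermitian positive definite matrix) and let H̄_k^{-1/2} denote the inverse of its unique Hermitian positive definite square root. Suppose that for every k the stationarity identity H_k H̄_k^{-1/2} ( I_{N_t} + H̄_k^{-1/2} H_kᴴ S̄_k H_k H̄_k^{-1/2} )⁻¹ H̄_k^{-1/2} H_kᴴ S̄_k = μ S̄_k holds. Then μ ≤ K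 N_t / P. -/
open Matrix
open scoped ComplexOrder

/-!
With `A_k = R_k H_kᴴ S̄_k H_k R_k ⪰ 0`, the trace of the stationarity identity is, by cyclicity,
`μ tr S̄_k = tr (A_k (I + A_k)⁻¹) = N_t - tr (I + A_k)⁻¹ ≤ N_t`. Summing over `k` gives
`μ P ≤ K N_t`.
-/

namespace Matrix

variable {𝕜 m n : Type*} [RCLike 𝕜] [Fintype m] [Fintype n] [DecidableEq n]

theorem PosSemidef.trace_mul_inv_one_add_le_card {A : Matrix n n 𝕜} (hA : A.PosSemidef) :
    (A * (1 + A)⁻¹).trace ≤ Fintype.card n := by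
  have hIA : (1 + A).PosDef := PosDef.one.add_posSemidef hA
  have hAX : A * (1 + A)⁻¹ = 1 - (1 + A)⁻¹ := by
    rw [eq_sub_iff_add_eq, ← add_one_mul, add_comm A,
      mul_nonsing_inv _ ((isUnit_iff_isUnit_det _).mp hIA.isUnit)]
  rw [hAX, trace_sub, trace_one]
  exact sub_le_self _ hIA.inv.posSemidef.trace_nonneg

theorem mul_trace_le_card_of_stationarity {R : Matrix n n 𝕜} (hR : R.IsHermitian)
    {H : Matrix m n 𝕜} {S : Matrix m m 𝕜} (hS : S.PosSemidef) {μ : 𝕜}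
    (hstat : H * R * (1 + R * Hᴴ * S * H * R)⁻¹ * R * Hᴴ * S = μ • S) :
    μ * S.trace ≤ Fintype.card n := by
  have hA : (R * Hᴴ * S * H * R).PosSemidef := by
    simpa only [hR.eq, Matrix.mul_assoc] using
      (hS.conjTranspose_mul_mul_same H).mul_mul_conjTranspose_same R
  set X := (1 + R * Hᴴ * S * H * R)⁻¹
  calc μ * S.trace = ((H * R * X) * (R * Hᴴ * S)).trace := by
        rw [← Matrix.mul_assoc, ← Matrix.mul_assoc, hstat, trace_smul, smul_eq_mul]
    _ = (R * Hᴴ * S * H * R * X).trace := by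
        rw [trace_mul_comm]
        simp only [Matrix.mul_assoc]
    _ ≤ Fintype.card n := hA.trace_mul_inv_one_add_le_card

end Matrix

theorem mu_upper_bound_general {K Nt : ℕ} {n : Fin K → ℕ}
    (μ P : ℝ) (hP : 0 < P)
    (H : ∀ k : Fin K, Matrix (Fin (n k)) (Fin Nt) ℂ)
    (Sb : ∀ k : Fin K, Matrix (Fin (n k)) (Fin (n k)) ℂ)
    (hSb : ∀ k, (Sb k).PosSemidef)
    (htr : (∑ k, (Sb k).trace) = (P : ℂ))
    (R : Fin K → Matrix (Fin Nt) (Fin Nt) ℂ)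
    (hRpd : ∀ k, (R k).PosDef)
    (hstat : ∀ k,
      H k * R k * (1 + R k * (H k)ᴴ * Sb k * H k * R k)⁻¹ * R k * (H k)ᴴ * Sb k
        = (μ : ℂ) • Sb k) :
    μ ≤ (K : ℝ) * Nt / P := by
  have hsum : ((μ * P : ℝ) : ℂ) ≤ ((K * Nt : ℝ) : ℂ) := by
    calc ((μ * P : ℝ) : ℂ) = ∑ k, (μ : ℂ) * (Sb k).trace := by
          rw [Complex.ofReal_mul, ← htr, Finset.mul_sum]
      _ ≤ ∑ _k : Fin K, (Nt : ℂ) := Finset.sum_le_sum fun k _ => by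
          simpa using mul_trace_le_card_of_stationarity (hRpd k).isHermitian (hSb k) (hstat k)
      _ = ((K * Nt : ℝ) : ℂ) := by simp
  rw [le_div_iff₀ hP]
  exact Complex.real_le_real.mp hsum

/-- Upper bound on the Lagrange multiplier. Let `μ > 0`, `P > 0`,
`H_k ∈ ℂ^{n_k×N_t}`, and `S̄_k` Hermitian PSD with `Σ_k tr(S̄_k) = P`. Let
`H̄_k = I + Σ_{j≠k} H_jᴴ S̄_j H_j` and let `R_k = H̄_k^{-1/2}` be the inverse of its unique
Hermitian positive definite square root (characterized by `R_k` PD and `R_k R_k H̄_k = I`).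
If the KKT stationarity identity
`H_k R_k (I + R_k H_kᴴ S̄_k H_k R_k)⁻¹ R_k H_kᴴ S̄_k = μ S̄_k` holds for every `k`,
then `μ ≤ K N_t / P`. -/
theorem mu_upper_bound {K Nt : ℕ} (hK : 0 < K) {n : Fin K → ℕ}
    (μ P : ℝ) (hμ : 0 < μ) (hP : 0 < P)
    (H : ∀ k : Fin K, Matrix (Fin (n k)) (Fin Nt) ℂ)
    (Sb : ∀ k : Fin K, Matrix (Fin (n k)) (Fin (n k)) ℂ)
    (hSb : ∀ k, (Sb k).PosSemidef)
    (htr : (∑ k, (Sb k).trace) = (P : ℂ))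
    (R : Fin K → Matrix (Fin Nt) (Fin Nt) ℂ)
    (hRpd : ∀ k, (R k).PosDef)
    (hRsq : ∀ k,
      R k * R k * (1 + ∑ j ∈ Finset.univ.erase k, (H j)ᴴ * Sb j * H j) = 1)
    (hstat : ∀ k,
      H k * R k * (1 + R k * (H k)ᴴ * Sb k * H k * R k)⁻¹ * R k * (H k)ᴴ * Sb k
        = (μ : ℂ) • Sb k) :
    μ ≤ (K : ℝ) * Nt / P :=
  mu_upper_bound_general μ P hP H Sb hSb htr R hRpd hstat
end

section
/- Let H ∈ ℂ^{n×m}, let H̄ ∈ ℂ^{m×m} be Hermitian positive definite, and let μ > 0. Let H H̄⁻¹ Hᴴ = V diag(σ_1,…,σ_n) Vᴴ be a spectral decomposition with V ∈ ℂ^{n×n} unitary and σ_i ≥ 0. Define S* = V diag(d_1,…,d_n) Vᴴ, where d_i = max(1/μ − 1/σ_i, 0) if σ_i > 0 and d_i = 0 if σ_i = 0. Then S* is Hermitian positive semidefinite and, for every Hermitian positive semidefinite S ∈ ℂ^{n×n}, ln det( I_m + H̄^{-1/2} Hᴴ S H H̄^{-1/2} ) − μ tr(S) ≤ ln det( I_m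 + H̄^{-1/2} Hᴴ S* H H̄^{-1/2} ) − μ tr(S*); that is, the water-filling matrix S* globally maximizes this objective over the positive semidefinite cone. -/
/-!
Conjugating by `V` and using Sylvester's identity `det (1 + X Y) = det (1 + Y X)`, the
objective at `S` becomes `log det (1 + Σ^{1/2} T Σ^{1/2}) - μ tr T` with `T = Vᴴ S V`
and `Σ = diag σ`. Hadamard's inequality bounds the log-determinant by
`∑ log (1 + σ_i t_i)`, with equality when `T` is diagonal, so the problem decouples into
the concave scalar problems `max_{t ≥ 0} log (1 + σ t) - μ t`, whose maximisers are the
water-filling levels `d_i`. Hadamard's inequality itself follows from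
`log det A ≤ tr A - card` (i.e. `log λ ≤ λ - 1` on the eigenvalues) after scaling `A` to
unit diagonal.
-/

open Matrix
open scoped ComplexOrder

/-- The water-filling matrix `S* = V diag(d) Vᴴ`, where `d_i = max(1/μ − 1/σ_i, 0)` if
`σ_i > 0` and `d_i = 0` otherwise. -/
noncomputable def waterfillMatrix {n : ℕ} (V : Matrix (Fin n) (Fin n) ℂ)
    (σ : Fin n → ℝ) (μ : ℝ) : Matrix (Fin n) (Fin n) ℂ :=
  V * Matrix.diagonal
      (fun i => ((if 0 < σ i then max (1 / μ - 1 / σ i) 0 else 0 : ℝ) : ℂ)) * Vᴴ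

namespace Matrix

theorem det_one_add_mul_mul_eq_of_mul_eq {α m n k : Type*} [CommRing α] [Fintype m]
    [DecidableEq m] [Fintype n] [DecidableEq n] [Fintype k] [DecidableEq k]
    {X : Matrix m n α} {Y : Matrix n m α} {B : Matrix n k α} {C : Matrix k n α}
    (h : Y * X = B * C) (S : Matrix n n α) :
    det (1 + X * S * Y) = det (1 + C * S * B) :=
  calc det (1 + X * S * Y) = det (1 + X * (S * Y)) := by rw [Matrix.mul_assoc]
    _ = det (1 + S * B * C) := by
      rw [det_one_add_mul_comm, Matrix.mul_assoc, h, Matrix.mul_assoc]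
    _ = det (1 + C * S * B) := by rw [det_one_add_mul_comm, Matrix.mul_assoc]

variable {𝕜 n : Type*} [RCLike 𝕜] [DecidableEq n]

variable (𝕜) in
noncomputable def diagonalSqrt (σ : n → ℝ) : Matrix n n 𝕜 :=
  diagonal fun i => ((√(σ i) : ℝ) : 𝕜)

@[simp]
theorem diagonalSqrt_conjTranspose {σ : n → ℝ} :
    (diagonalSqrt 𝕜 σ)ᴴ = diagonalSqrt 𝕜 σ := by
  simp [diagonalSqrt, diagonal_conjTranspose]

variable [Fintype n]

theorem PosDef.log_det_le_trace_sub_card {A : Matrix n n 𝕜} (hA : A.PosDef) :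
    Real.log (RCLike.re A.det) ≤ RCLike.re A.trace - Fintype.card n := by
  have hpos := hA.eigenvalues_pos
  rw [hA.isHermitian.det_eq_prod_eigenvalues, hA.isHermitian.trace_eq_sum_eigenvalues,
    ← RCLike.ofReal_prod, ← RCLike.ofReal_sum, RCLike.ofReal_re, RCLike.ofReal_re,
    Real.log_prod fun i _ => (hpos i).ne', Fintype.card_eq_sum_ones, Nat.cast_sum,
    Nat.cast_one, ← Finset.sum_sub_distrib]
  exact Finset.sum_le_sum fun i _ => Real.log_le_sub_one_of_pos (hpos i)

/-- Hadamard's inequality. -/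
theorem PosDef.log_det_le_sum_log_diag {A : Matrix n n 𝕜} (hA : A.PosDef) :
    Real.log (RCLike.re A.det) ≤ ∑ i, Real.log (RCLike.re (A i i)) := by
  set c : n → ℝ := fun i => RCLike.re (A i i)
  have hc : ∀ i, 0 < c i := fun i => (RCLike.pos_iff.mp hA.diag_pos).1
  have hAc : ∀ i, A i i = c i := fun i => (hA.isHermitian.coe_re_apply_self i).symm
  -- `D A D` with `D = diag (c^{-1/2})` has unit diagonal, so its trace is `card n`
  set D : Matrix n n 𝕜 := diagonal fun i => ((√(c i))⁻¹ : ℝ)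
  have hDD : ∀ i, ((√(c i))⁻¹ : ℝ) * ((√(c i))⁻¹ : ℝ) = (c i)⁻¹ := fun i => by
    rw [← mul_inv, Real.mul_self_sqrt (hc i).le]
  have hD : IsUnit D := isUnit_diagonal.mpr <| Pi.isUnit_iff.mpr fun i =>
    (RCLike.ofReal_ne_zero.mpr (inv_ne_zero (Real.sqrt_pos.mpr (hc i)).ne')).isUnit
  have hDstar : star D = D := by simp [D, star_eq_conjTranspose, diagonal_conjTranspose]
  have hN : (D * A * D).PosDef := by
    simpa only [hDstar] using (Matrix.IsUnit.posDef_star_left_conjugate_iff hD).mpr hA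
  have hdiag : ∀ i, (D * A * D) i i = 1 := fun i => by
    rw [mul_diagonal, diagonal_mul, hAc, mul_comm, ← mul_assoc, ← RCLike.ofReal_mul,
      ← RCLike.ofReal_mul, hDD, inv_mul_cancel₀ (hc i).ne', RCLike.ofReal_one]
  have htrace : RCLike.re (D * A * D).trace = Fintype.card n := by simp [trace, hdiag]
  have hdet : RCLike.re (D * A * D).det = RCLike.re A.det * (∏ i, c i)⁻¹ := by
    rw [det_mul, det_mul, mul_right_comm, ← det_mul, diagonal_mul_diagonal, det_diagonal]
    simp_rw [← RCLike.ofReal_mul, hDD, ← RCLike.ofReal_prod, RCLike.re_ofReal_mul,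
      Finset.prod_inv_distrib, mul_comm]
  have hdetA : 0 < RCLike.re A.det := (RCLike.pos_iff.mp hA.det_pos).1
  have hprod : 0 < ∏ i, c i := Finset.prod_pos fun i _ => hc i
  have := hN.log_det_le_trace_sub_card
  rw [htrace, sub_self, hdet, Real.log_mul hdetA.ne' (inv_pos.mpr hprod).ne', Real.log_inv,
    Real.log_prod fun i _ => (hc i).ne'] at this
  linarith

variable {σ : n → ℝ}

theorem diagonalSqrt_mul_diagonal_mul_diagonalSqrt (hσ : ∀ i, 0 ≤ σ i) (w : n → 𝕜) :
    diagonalSqrt 𝕜 σ * diagonal w * diagonalSqrt 𝕜 σ =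
      diagonal fun i => (σ i : 𝕜) * w i := by
  simp_rw [diagonalSqrt, diagonal_mul_diagonal, mul_right_comm _ _ ((√(σ _) : ℝ) : 𝕜),
    ← RCLike.ofReal_mul, Real.mul_self_sqrt (hσ _)]

theorem diagonalSqrt_mul_self (hσ : ∀ i, 0 ≤ σ i) :
    diagonalSqrt 𝕜 σ * diagonalSqrt 𝕜 σ = diagonal fun i => (σ i : 𝕜) := by
  simpa using diagonalSqrt_mul_diagonal_mul_diagonalSqrt (𝕜 := 𝕜) hσ 1

theorem diagonalSqrt_mul_mul_diagonalSqrt_apply_self (hσ : ∀ i, 0 ≤ σ i)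
    (T : Matrix n n 𝕜) (i : n) :
    (diagonalSqrt 𝕜 σ * T * diagonalSqrt 𝕜 σ) i i = σ i * T i i := by
  rw [diagonalSqrt, mul_diagonal, diagonal_mul, mul_right_comm, ← RCLike.ofReal_mul,
    Real.mul_self_sqrt (hσ i)]

theorem log_det_one_add_diagonalSqrt_conj_le (hσ : ∀ i, 0 ≤ σ i) {T : Matrix n n 𝕜}
    (hT : T.PosSemidef) :
    Real.log (RCLike.re (1 + diagonalSqrt 𝕜 σ * T * diagonalSqrt 𝕜 σ).det) ≤
      ∑ i, Real.log (1 + σ i * RCLike.re (T i i)) := by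
  have hM : (1 + diagonalSqrt 𝕜 σ * T * diagonalSqrt 𝕜 σ).PosDef :=
    PosDef.one.add_posSemidef (by simpa using hT.conjTranspose_mul_mul_same (diagonalSqrt 𝕜 σ))
  refine hM.log_det_le_sum_log_diag.trans_eq (Finset.sum_congr rfl fun i _ => ?_)
  rw [Matrix.add_apply, diagonalSqrt_mul_mul_diagonalSqrt_apply_self hσ, one_apply_eq, map_add,
    RCLike.re_ofReal_mul, RCLike.one_re]

theorem det_one_add_diagonalSqrt_conj_diagonal (hσ : ∀ i, 0 ≤ σ i) (w : n → ℝ) :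
    (1 + diagonalSqrt 𝕜 σ * diagonal (fun i => (w i : 𝕜)) * diagonalSqrt 𝕜 σ).det =
      ((∏ i, (1 + σ i * w i) : ℝ) : 𝕜) := by
  rw [diagonalSqrt_mul_diagonal_mul_diagonalSqrt hσ, ← diagonal_one, diagonal_add, det_diagonal]
  push_cast
  rfl

end Matrix

noncomputable def waterfillPower (μ σ : ℝ) : ℝ :=
  if 0 < σ then max (1 / μ - 1 / σ) 0 else 0

theorem waterfillPower_nonneg (μ σ : ℝ) : 0 ≤ waterfillPower μ σ := by
  unfold waterfillPower; split_ifs <;> simp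

/-- The KKT conditions: the marginal gain `σ / (1 + σ w)` of `log (1 + σ t)` at the water
level `w` is at most `μ`, with equality where `w > 0`. -/
theorem waterfillPower_kkt {μ σ t : ℝ} (hμ : 0 < μ) (hσ : 0 ≤ σ) (ht : 0 ≤ t) :
    σ * (t - waterfillPower μ σ) ≤
      μ * (t - waterfillPower μ σ) * (1 + σ * waterfillPower μ σ) := by
  unfold waterfillPower
  split_ifs with hσ0
  · rcases le_total (1 / μ - 1 / σ) 0 with h | h
    · have : σ ≤ μ := le_of_one_div_le_one_div hμ (by linarith)
      rw [max_eq_right h]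
      nlinarith
    · rw [max_eq_left h]
      apply le_of_eq
      field_simp
      ring
  · obtain rfl : σ = 0 := le_antisymm (not_lt.mp hσ0) hσ
    nlinarith

theorem log_one_add_mul_sub_mul_le_waterfillPower {μ σ t : ℝ} (hμ : 0 < μ) (hσ : 0 ≤ σ)
    (ht : 0 ≤ t) :
    Real.log (1 + σ * t) - μ * t ≤
      Real.log (1 + σ * waterfillPower μ σ) - μ * waterfillPower μ σ := by
  set w := waterfillPower μ σ
  have hw : 0 < 1 + σ * w := by have := waterfillPower_nonneg μ σ; positivity
  have hlog : Real.log ((1 + σ * t) / (1 + σ * w)) ≤ (1 + σ * t) / (1 + σ * w) - 1 :=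
    Real.log_le_sub_one_of_pos (by positivity)
  have hgain : (1 + σ * t) / (1 + σ * w) - 1 ≤ μ * (t - w) := by
    rw [div_sub_one hw.ne', div_le_iff₀ hw]
    linarith [waterfillPower_kkt hμ hσ ht]
  rw [Real.log_div (by positivity) hw.ne'] at hlog
  linarith

theorem waterfilling_optimal_diagonal {𝕜 n : Type*} [RCLike 𝕜] [Fintype n] [DecidableEq n]
    {μ : ℝ} (hμ : 0 < μ) {σ : n → ℝ} (hσ : ∀ i, 0 ≤ σ i) {T : Matrix n n 𝕜}
    (hT : T.PosSemidef) :
    Real.log (RCLike.re (1 + diagonalSqrt 𝕜 σ * T * diagonalSqrt 𝕜 σ).det) -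
        μ * RCLike.re T.trace ≤
      Real.log (RCLike.re (1 + diagonalSqrt 𝕜 σ *
        diagonal (fun i => (waterfillPower μ (σ i) : 𝕜)) * diagonalSqrt 𝕜 σ).det) -
        μ * RCLike.re (diagonal fun i => (waterfillPower μ (σ i) : 𝕜)).trace := by
  set t : n → ℝ := fun i => RCLike.re (T i i)
  set w : n → ℝ := fun i => waterfillPower μ (σ i)
  have ht : ∀ i, 0 ≤ t i := fun i => (RCLike.nonneg_iff.mp hT.diag_nonneg).1
  have hw : ∀ i, 0 < 1 + σ i * w i := fun i => by
    have := waterfillPower_nonneg μ (σ i); have := hσ i; positivity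
  calc _ ≤ ∑ i, Real.log (1 + σ i * t i) - μ * ∑ i, t i := by
        rw [trace, map_sum]
        exact sub_le_sub_right (log_det_one_add_diagonalSqrt_conj_le hσ hT) _
    _ = ∑ i, (Real.log (1 + σ i * t i) - μ * t i) := by
        rw [Finset.mul_sum, Finset.sum_sub_distrib]
    _ ≤ ∑ i, (Real.log (1 + σ i * w i) - μ * w i) := Finset.sum_le_sum fun i _ =>
        log_one_add_mul_sub_mul_le_waterfillPower hμ (hσ i) (ht i)
    _ = _ := by
        rw [det_one_add_diagonalSqrt_conj_diagonal hσ, RCLike.ofReal_re,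
          Real.log_prod fun i _ => (hw i).ne', trace_diagonal, ← RCLike.ofReal_sum,
          RCLike.ofReal_re, Finset.mul_sum, Finset.sum_sub_distrib]

theorem waterfilling_optimal_general {n m : ℕ} (H : Matrix (Fin n) (Fin m) ℂ)
    (Hbar : Matrix (Fin m) (Fin m) ℂ)
    (μ : ℝ) (hμ : 0 < μ)
    (R : Matrix (Fin m) (Fin m) ℂ) (hRsq : R * R = Hbar⁻¹)
    (V : Matrix (Fin n) (Fin n) ℂ) (hV : V ∈ Matrix.unitaryGroup (Fin n) ℂ)
    (σ : Fin n → ℝ) (hσ : ∀ i, 0 ≤ σ i)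
    (hdecomp : H * Hbar⁻¹ * Hᴴ = V * Matrix.diagonal (fun i => (σ i : ℂ)) * Vᴴ) :
    (waterfillMatrix V σ μ).PosSemidef ∧
    ∀ S : Matrix (Fin n) (Fin n) ℂ, S.PosSemidef →
      Real.log ((1 + R * Hᴴ * S * H * R).det).re - μ * (S.trace).re ≤
      Real.log ((1 + R * Hᴴ * waterfillMatrix V σ μ * H * R).det).re
        - μ * ((waterfillMatrix V σ μ).trace).re := by
  have hVV : Vᴴ * V = 1 := mem_unitaryGroup_iff'.mp hV
  have hVV' : V * Vᴴ = 1 := mem_unitaryGroup_iff.mp hV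
  set D : Matrix (Fin n) (Fin n) ℂ := diagonalSqrt ℂ σ
  set W : Matrix (Fin n) (Fin n) ℂ := diagonal fun i => (waterfillPower μ (σ i) : ℂ)
  have hgram : H * R * (R * Hᴴ) = V * D * (D * Vᴴ) :=
    calc H * R * (R * Hᴴ) = H * Hbar⁻¹ * Hᴴ := by rw [← hRsq]; simp only [Matrix.mul_assoc]
      _ = V * (D * D) * Vᴴ := hdecomp.trans (by rw [diagonalSqrt_mul_self hσ]; rfl)
      _ = V * D * (D * Vᴴ) := by simp only [Matrix.mul_assoc]
  have hobj : ∀ S : Matrix (Fin n) (Fin n) ℂ,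
      Real.log ((1 + R * Hᴴ * S * H * R).det).re - μ * (S.trace).re =
        Real.log (RCLike.re (1 + D * (Vᴴ * S * V) * D).det) -
          μ * RCLike.re (Vᴴ * S * V).trace := by
    intro S
    rw [show R * Hᴴ * S * H * R = R * Hᴴ * S * (H * R) by simp only [Matrix.mul_assoc],
      det_one_add_mul_mul_eq_of_mul_eq hgram, trace_mul_cycle, hVV', Matrix.one_mul]
    simp only [Matrix.mul_assoc]
    rfl
  have hW : Vᴴ * waterfillMatrix V σ μ * V = W := by
    change Vᴴ * (V * W * Vᴴ) * V = W
    simp only [← Matrix.mul_assoc, hVV, Matrix.one_mul]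
    rw [Matrix.mul_assoc, hVV, Matrix.mul_one]
  refine ⟨?_, fun S hS => ?_⟩
  · exact (posSemidef_diagonal_iff.mpr fun i =>
      RCLike.ofReal_nonneg.mpr (waterfillPower_nonneg μ (σ i))).mul_mul_conjTranspose_same V
  · rw [hobj, hobj, hW]
    exact waterfilling_optimal_diagonal hμ hσ (hS.conjTranspose_mul_mul_same V)

/-- Optimality of water-filling. Let `H ∈ ℂ^{n×m}`, `H̄ ∈ ℂ^{m×m}` Hermitian
positive definite, `μ > 0`, and let `H H̄⁻¹ Hᴴ = V diag(σ) Vᴴ` be a spectral decomposition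
with `V` unitary and `σ_i ≥ 0`. With `R = H̄^{-1/2}` (the inverse of the unique Hermitian
PD square root of `H̄`), the water-filling matrix `S*` is Hermitian PSD and maximizes
`S ↦ ln det(I + R Hᴴ S H R) − μ tr(S)` over all Hermitian PSD `S`. -/
theorem waterfilling_optimal {n m : ℕ} (H : Matrix (Fin n) (Fin m) ℂ)
    (Hbar : Matrix (Fin m) (Fin m) ℂ) (hHbar : Hbar.PosDef)
    (μ : ℝ) (hμ : 0 < μ)
    (R : Matrix (Fin m) (Fin m) ℂ) (hRpd : R.PosDef) (hRsq : R * R = Hbar⁻¹)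
    (V : Matrix (Fin n) (Fin n) ℂ) (hV : V ∈ Matrix.unitaryGroup (Fin n) ℂ)
    (σ : Fin n → ℝ) (hσ : ∀ i, 0 ≤ σ i)
    (hdecomp : H * Hbar⁻¹ * Hᴴ = V * Matrix.diagonal (fun i => (σ i : ℂ)) * Vᴴ) :
    (waterfillMatrix V σ μ).PosSemidef ∧
    ∀ S : Matrix (Fin n) (Fin n) ℂ, S.PosSemidef →
      Real.log ((1 + R * Hᴴ * S * H * R).det).re - μ * (S.trace).re ≤
      Real.log ((1 + R * Hᴴ * waterfillMatrix V σ μ * H * R).det).re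
        - μ * ((waterfillMatrix V σ μ).trace).re :=
  waterfilling_optimal_general H Hbar μ hμ R hRsq V hV σ hσ hdecomp
end

section
/- Let E be a real inner product space and f : E → ℝ differentiable with gradient ∇f satisfying ‖∇f(x) − ∇f(y)‖ ≤ L ‖x − y‖ for all x, y, where L > 0. Let C ⊆ E be a nonempty subset, x ∈ C, μ > 0, and let y ∈ C satisfy ‖y − (x + μ ∇f(x))‖ ≤ ‖z − (x + μ ∇f(x))‖ for all z ∈ C. Then f(y) ≥ f(x) + (1/2)(1/μ − L) ‖y − x‖². In particular, if μ ≤ ρ/L for some 0 < ρ < 1, then f(y) ≥ f(x) + (L/2)(1/ρ − 1) ‖y − x‖² ≥ f(x), so one projected gradient ascent step does not decrease f. -/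
/-!
Along the segment from `x` to `y`, the function
`t ↦ f (x + t • (y - x)) - t ⟪∇f x, y - x⟫ + (L / 2) t² ‖y - x‖²` has nonnegative derivative
for `t ≥ 0` because `∇f` is `L`-Lipschitz; comparing its values at `0` and `1` gives the lower
bound `f y ≥ f x + ⟪∇f x, y - x⟫ - (L / 2) ‖y - x‖²`. Since `x ∈ C`, the projection `y` is at
least as close to `x + μ ∇f x` as `x` is; expanding the squares turns this into
`‖y - x‖² ≤ 2μ ⟪∇f x, y - x⟫`, and the two inequalities combine to the claim.
-/

open scoped RealInnerProductSpace

section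

variable {E : Type*} [NormedAddCommGroup E] [InnerProductSpace ℝ E]

theorem hasFDerivAt_innerSL_of_fderiv_apply_eq_inner {f : E → ℝ} {g : E → E}
    (hf : Differentiable ℝ f) (hgrad : ∀ x h, fderiv ℝ f x h = ⟪g x, h⟫) (x : E) :
    HasFDerivAt f (innerSL ℝ (g x)) x := by
  convert (hf x).hasFDerivAt using 1
  ext h
  rw [innerSL_apply_apply, hgrad]

theorem add_inner_sub_sub_le_of_lipschitz_gradient {f : E → ℝ} {g : E → E}
    (hg : ∀ x, HasFDerivAt f (innerSL ℝ (g x)) x) {L : ℝ}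
    (hlip : ∀ x y, ‖g x - g y‖ ≤ L * ‖x - y‖) (x y : E) :
    f x + ⟪g x, y - x⟫ - L / 2 * ‖y - x‖ ^ 2 ≤ f y := by
  set v := y - x
  let φ : ℝ → ℝ := fun t ↦ f (x + t • v) - t * ⟪g x, v⟫ + L / 2 * t ^ 2 * ‖v‖ ^ 2
  have hφ : ∀ t, HasDerivAt φ (⟪g (x + t • v), v⟫ - ⟪g x, v⟫ + L * t * ‖v‖ ^ 2) t := by
    intro t
    have hline : HasDerivAt (fun t : ℝ ↦ x + t • v) v t := by
      simpa using ((hasDerivAt_id t).smul_const v).const_add x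
    have hf := (hg (x + t • v)).comp_hasDerivAt t hline
    rw [innerSL_apply_apply] at hf
    refine ((hf.sub ((hasDerivAt_id t).mul_const ⟪g x, v⟫)).add
      (((hasDerivAt_pow 2 t).const_mul (L / 2)).mul_const (‖v‖ ^ 2))).congr_deriv ?_
    push_cast
    ring
  have hφ_nonneg : ∀ t, 0 ≤ t → 0 ≤ ⟪g (x + t • v), v⟫ - ⟪g x, v⟫ + L * t * ‖v‖ ^ 2 := by
    intro t ht
    have hdiff : |⟪g (x + t • v) - g x, v⟫| ≤ L * t * ‖v‖ ^ 2 :=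
      calc |⟪g (x + t • v) - g x, v⟫| ≤ ‖g (x + t • v) - g x‖ * ‖v‖ :=
            abs_real_inner_le_norm _ _
        _ ≤ L * ‖x + t • v - x‖ * ‖v‖ := by gcongr; exact hlip _ _
        _ = L * t * ‖v‖ ^ 2 := by
            rw [add_sub_cancel_left, norm_smul, Real.norm_of_nonneg ht]; ring
    rw [inner_sub_left] at hdiff
    linarith [neg_abs_le (⟪g (x + t • v), v⟫ - ⟪g x, v⟫)]
  have hmono : MonotoneOn φ (Set.Ici 0) :=
    monotoneOn_of_hasDerivWithinAt_nonneg (convex_Ici 0)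
      (fun t _ ↦ (hφ t).continuousAt.continuousWithinAt)
      (fun t _ ↦ (hφ t).hasDerivWithinAt)
      (fun t ht ↦ hφ_nonneg t (le_of_lt (by simpa using ht)))
  have hφ01 := hmono Set.self_mem_Ici (Set.mem_Ici.2 zero_le_one) zero_le_one
  simp only [φ, v, zero_smul, add_zero, zero_mul, sub_zero, ne_eq, OfNat.ofNat_ne_zero,
    not_false_eq_true, zero_pow, mul_zero, one_smul, add_sub_cancel, one_mul, one_pow,
    mul_one] at hφ01
  linarith

theorem norm_sub_sq_le_two_mul_inner_of_norm_sub_le {x y v : E} {μ : ℝ}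
    (h : ‖y - (x + μ • v)‖ ≤ ‖x - (x + μ • v)‖) :
    ‖y - x‖ ^ 2 ≤ 2 * μ * ⟪v, y - x⟫ := by
  rw [sub_add_eq_sub_sub, sub_add_cancel_left, norm_neg] at h
  have hsq := pow_le_pow_left₀ (norm_nonneg _) h 2
  rw [norm_sub_sq_real, real_inner_smul_right, real_inner_comm] at hsq
  linarith

end

theorem projected_gradient_ascent_step_general {E : Type*} [NormedAddCommGroup E]
    [InnerProductSpace ℝ E]
    (f : E → ℝ) (g : E → E) (hf : Differentiable ℝ f)
    (hgrad : ∀ x h, fderiv ℝ f x h = (inner ℝ (g x) h : ℝ))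
    (L : ℝ) (hlip : ∀ x y, ‖g x - g y‖ ≤ L * ‖x - y‖)
    (C : Set E) (x : E) (hx : x ∈ C) (μ : ℝ) (hμ : 0 < μ)
    (y : E) (hproj : ∀ z ∈ C, ‖y - (x + μ • g x)‖ ≤ ‖z - (x + μ • g x)‖) :
    (f x + (1 / 2) * (1 / μ - L) * ‖y - x‖ ^ 2 ≤ f y) ∧
    ∀ ρ : ℝ, 0 < ρ → ρ < 1 → μ ≤ ρ / L →
      f x + (L / 2) * (1 / ρ - 1) * ‖y - x‖ ^ 2 ≤ f y ∧ f x ≤ f y := by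
  have hlower := add_inner_sub_sub_le_of_lipschitz_gradient
    (hasFDerivAt_innerSL_of_fderiv_apply_eq_inner hf hgrad) hlip x y
  have hstep := norm_sub_sq_le_two_mul_inner_of_norm_sub_le (hproj x hx)
  have hmain : f x + (1 / 2) * (1 / μ - L) * ‖y - x‖ ^ 2 ≤ f y := by
    have : ‖y - x‖ ^ 2 / (2 * μ) ≤ ⟪g x, y - x⟫ := (div_le_iff₀' (by positivity)).2 hstep
    linarith [show ‖y - x‖ ^ 2 / (2 * μ) = (1 / 2) * (1 / μ) * ‖y - x‖ ^ 2 by ring]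
  refine ⟨hmain, fun ρ hρ hρ1 hμρ ↦ ?_⟩
  have hL : 0 < L := by
    by_contra! hL
    linarith [div_nonpos_of_nonneg_of_nonpos hρ.le hL]
  have hcoef : (L / 2) * (1 / ρ - 1) ≤ (1 / 2) * (1 / μ - L) := by
    have : L / ρ ≤ 1 / μ := by
      rw [div_le_div_iff₀ hρ hμ]
      linarith [(le_div_iff₀ hL).mp hμρ]
    linarith [show (L / 2) * (1 / ρ - 1) = (1 / 2) * (L / ρ - L) by ring]
  have hρ_inv : 1 ≤ 1 / ρ := by rw [le_div_iff₀ hρ]; linarith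
  have hsq : 0 ≤ ‖y - x‖ ^ 2 := by positivity
  have hgain : 0 ≤ (L / 2) * (1 / ρ - 1) * ‖y - x‖ ^ 2 :=
    mul_nonneg (mul_nonneg (by positivity) (by linarith)) hsq
  have hbound : f x + (L / 2) * (1 / ρ - 1) * ‖y - x‖ ^ 2 ≤ f y :=
    le_trans (by gcongr) hmain
  exact ⟨hbound, by linarith⟩

/-- Ascent property of one projected gradient step. Let `E` be a real inner
product space, `f : E → ℝ` differentiable with gradient `g` (characterized by
`df_x(h) = ⟨g x, h⟩`) that is `L`-Lipschitz, `L > 0`. Let `C ⊆ E` be nonempty, `x ∈ C`,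
`μ > 0`, and let `y ∈ C` be a projection of `x + μ ∇f(x)` onto `C`. Then
`f(y) ≥ f(x) + (1/2)(1/μ − L)‖y − x‖²`; in particular, if `μ ≤ ρ/L` with `0 < ρ < 1`,
then `f(y) ≥ f(x) + (L/2)(1/ρ − 1)‖y − x‖² ≥ f(x)`. -/
theorem projected_gradient_ascent_step {E : Type*} [NormedAddCommGroup E]
    [InnerProductSpace ℝ E]
    (f : E → ℝ) (g : E → E) (hf : Differentiable ℝ f)
    (hgrad : ∀ x h, fderiv ℝ f x h = (inner ℝ (g x) h : ℝ))
    (L : ℝ) (hL : 0 < L) (hlip : ∀ x y, ‖g x - g y‖ ≤ L * ‖x - y‖)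
    (C : Set E) (hC : C.Nonempty) (x : E) (hx : x ∈ C) (μ : ℝ) (hμ : 0 < μ)
    (y : E) (hy : y ∈ C)
    (hproj : ∀ z ∈ C, ‖y - (x + μ • g x)‖ ≤ ‖z - (x + μ • g x)‖) :
    (f x + (1 / 2) * (1 / μ - L) * ‖y - x‖ ^ 2 ≤ f y) ∧
    ∀ ρ : ℝ, 0 < ρ → ρ < 1 → μ ≤ ρ / L →
      f x + (L / 2) * (1 / ρ - 1) * ‖y - x‖ ^ 2 ≤ f y ∧ f x ≤ f y :=
  projected_gradient_ascent_step_general f g hf hgrad L hlip C x hx μ hμ y hproj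
end

section
/- Let b, u ∈ ℂ^n and let θ ∈ ℂ with |θ| = 1. Then det( I_n + θ b uᴴ + conj(θ) u bᴴ ) = |1 + θ σ|² − ‖b‖² ‖u‖², where σ = uᴴ b = Σ_i conj(u_i) b_i. In particular this determinant is a real number. -/
/-!
The update `θ b uᴴ + conj θ u bᴴ` factors as `A B` with `A` of size `n × 2` and `B` of size
`2 × n`, so by the Weinstein–Aronszajn identity `det (1 + A B) = det (1 + B A)` the determinant is
that of a `2 × 2` matrix with diagonal `1 + θ σ`, `conj (1 + θ σ)` and off-diagonal product
`θ conj θ ‖u‖² ‖b‖² = ‖b‖² ‖u‖²`.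
-/

open Matrix

namespace Matrix

variable {ι R : Type*} [Fintype ι] [DecidableEq ι] [CommRing R]

theorem det_one_add_vecMulVec_add_vecMulVec (a₁ c₁ a₂ c₂ : ι → R) :
    (1 + vecMulVec a₁ c₁ + vecMulVec a₂ c₂).det
      = (1 + c₁ ⬝ᵥ a₁) * (1 + c₂ ⬝ᵥ a₂) - (c₁ ⬝ᵥ a₂) * (c₂ ⬝ᵥ a₁) := by
  have hAB : vecMulVec a₁ c₁ + vecMulVec a₂ c₂ = (of ![a₁, a₂])ᵀ * of ![c₁, c₂] := by
    ext i k
    simp [mul_apply, Fin.sum_univ_two, vecMulVec_apply]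
  have hBA : of ![c₁, c₂] * (of ![a₁, a₂])ᵀ = !![c₁ ⬝ᵥ a₁, c₁ ⬝ᵥ a₂; c₂ ⬝ᵥ a₁, c₂ ⬝ᵥ a₂] := by
    ext j j'
    fin_cases j <;> fin_cases j' <;> rfl
  rw [add_assoc, hAB, det_one_add_mul_comm, hBA, det_fin_two]
  simp

end Matrix

theorem Complex.star_dotProduct_self {ι : Type*} [Fintype ι] (v : ι → ℂ) :
    star v ⬝ᵥ v = ((∑ i, ‖v i‖ ^ 2 : ℝ) : ℂ) := by
  simp [dotProduct, Complex.conj_mul']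

/-- For `b, u ∈ ℂ^n` and `θ ∈ ℂ` with `|θ| = 1`,
`det(I_n + θ b uᴴ + conj(θ) u bᴴ) = |1 + θ σ|² − ‖b‖² ‖u‖²` where `σ = uᴴ b`.
In particular the determinant is a real number. -/
theorem det_one_add_rank_two_update {n : ℕ} (b u : Fin n → ℂ) (θ : ℂ)
    (hθ : ‖θ‖ = 1) :
    ((1 : Matrix (Fin n) (Fin n) ℂ) + θ • Matrix.vecMulVec b (star u)
        + (starRingEnd ℂ θ) • Matrix.vecMulVec u (star b)).det
      = ((‖1 + θ * ∑ i, (starRingEnd ℂ) (u i) * b i‖ ^ 2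
          - (∑ i, ‖b i‖ ^ 2) * (∑ i, ‖u i‖ ^ 2) : ℝ) : ℂ) := by
  have hσ : ∑ i, (starRingEnd ℂ) (u i) * b i = star u ⬝ᵥ b := rfl
  have hθθ : θ * starRingEnd ℂ θ = 1 := by simp [Complex.mul_conj', hθ]
  rw [← smul_vecMulVec, ← smul_vecMulVec, det_one_add_vecMulVec_add_vecMulVec, hσ,
    Complex.ofReal_sub, Complex.ofReal_mul, ← Complex.star_dotProduct_self,
    ← Complex.star_dotProduct_self, Complex.ofReal_pow, ← Complex.mul_conj', map_add, map_one,
    map_mul]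
  simp only [dotProduct_smul, smul_eq_mul]
  rw [star_dotProduct b u, Complex.star_def]
  linear_combination (-(star u ⬝ᵥ u) * (star b ⬝ᵥ b)) * hθθ
end

section
/- Let A ∈ ℂ^{n×n} be Hermitian positive definite, let b, u ∈ ℂ^n, set B = b uᴴ, and suppose σ := uᴴ A⁻¹ b ≠ 0 (σ is the unique nonzero eigenvalue of A⁻¹B, equal to tr(A⁻¹B)). Define θ* = conj(σ)/|σ| = exp(−i·arg σ). Then for every θ ∈ ℂ with |θ| = 1, det( A + θ B + conj(θ) Bᴴ ) ≤ det( A + θ* B + conj(θ*) Bᴴ ), where both determinants are real numbers since the matrices are Hermitian. That is, θ* maximizes θ ↦ det(A + θB + conj(θ)Bᴴ) over the unit circle. -/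
/-!
Write `θ B + conj θ Bᴴ = vecMulVec (θ b) uᴴ + vecMulVec (conj θ u) bᴴ`. The rank-two matrix
determinant lemma, together with `bᴴ A⁻¹ u = conj σ` (as `A⁻¹` is Hermitian), gives
`det (A + θ B + conj θ Bᴴ) = det A * (|1 + θ σ|² - |θ|² (uᴴ A⁻¹ u) (bᴴ A⁻¹ b))`, with
`det A > 0` and a nonnegative product of quadratic forms. For `|θ| = 1` the first term is at most
`(1 + |σ|)²`, which is its value at `θ*` since `θ* σ = |σ|`, and `|θ*| ≤ 1` makes the subtracted
term at `θ*` no larger than at `θ`.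
-/
open Matrix
open scoped ComplexOrder

namespace Matrix

variable {m : Type*} [Fintype m]

theorem det_add_vecMulVec_add_vecMulVec {R : Type*} [DecidableEq m] [CommRing R]
    (A : Matrix m m R) (hA : IsUnit A.det) (x y z w : m → R) :
    (A + vecMulVec x y + vecMulVec z w).det =
      A.det * ((1 + y ⬝ᵥ A⁻¹ *ᵥ x) * (1 + w ⬝ᵥ A⁻¹ *ᵥ z) -
        (y ⬝ᵥ A⁻¹ *ᵥ z) * (w ⬝ᵥ A⁻¹ *ᵥ x)) := by
  have hUV : vecMulVec x y + vecMulVec z w = (of ![x, z])ᵀ * of ![y, w] := by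
    ext i j
    simp [vecMulVec_apply, mul_apply, Fin.sum_univ_two]
  rw [add_assoc, hUV, det_add_mul _ _ hA, det_fin_two]
  simp [vecMul_transpose, dotProduct_mulVec, dotProduct_comm _ (_ ᵥ* A⁻¹)]

theorem IsHermitian.star_dotProduct_mulVec {R : Type*} [CommSemiring R] [StarRing R]
    {M : Matrix m m R} (hM : M.IsHermitian) (x y : m → R) :
    star x ⬝ᵥ M *ᵥ y = star (star y ⬝ᵥ M *ᵥ x) := by
  rw [star_dotProduct, star_mulVec, hM.eq, dotProduct_mulVec]

theorem IsHermitian.ofReal_re_star_dotProduct_mulVec {M : Matrix m m ℂ} (hM : M.IsHermitian)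
    (x : m → ℂ) : ((star x ⬝ᵥ M *ᵥ x).re : ℂ) = star x ⬝ᵥ M *ᵥ x :=
  Complex.conj_eq_iff_re.mp (hM.star_dotProduct_mulVec x x).symm

theorem IsHermitian.det_add_smul_vecMulVec_add_conj_smul_conjTranspose [DecidableEq m]
    {A : Matrix m m ℂ} (hA : A.IsHermitian) (hdet : IsUnit A.det) (b u : m → ℂ) (θ : ℂ) :
    (A + θ • vecMulVec b (star u) + starRingEnd ℂ θ • (vecMulVec b (star u))ᴴ).det =
      A.det * ((‖1 + θ * (star u ⬝ᵥ A⁻¹ *ᵥ b)‖ ^ 2 -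
        ‖θ‖ ^ 2 * ((star u ⬝ᵥ A⁻¹ *ᵥ u).re * (star b ⬝ᵥ A⁻¹ *ᵥ b).re) : ℝ) : ℂ) := by
  have hA' := hA.inv
  rw [conjTranspose_vecMulVec, star_star, ← smul_vecMulVec, ← smul_vecMulVec,
    det_add_vecMulVec_add_vecMulVec A hdet]
  simp only [mulVec_smul, dotProduct_smul, smul_eq_mul]
  rw [hA'.star_dotProduct_mulVec b u]
  push_cast
  rw [hA'.ofReal_re_star_dotProduct_mulVec, hA'.ofReal_re_star_dotProduct_mulVec,
    ← Complex.mul_conj', ← Complex.mul_conj']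
  simp only [map_add, map_one, map_mul, Complex.star_def]
  ring

end Matrix

namespace Complex

open ComplexConjugate

theorem conj_div_norm_mul_self (z : ℂ) : conj z / ‖z‖ * z = ‖z‖ := by
  rcases eq_or_ne z 0 with rfl | hz
  · simp
  rw [div_mul_eq_mul_div, mul_comm, mul_conj', sq, mul_div_assoc, div_self (by simpa), mul_one]

theorem norm_conj_div_norm_le_one (z : ℂ) : ‖conj z / ‖z‖‖ ≤ 1 := by
  rw [norm_div, norm_conj, norm_real, norm_norm]
  exact div_self_le_one _

end Complex

theorem optimal_unit_phase_det_general {n : ℕ} (A : Matrix (Fin n) (Fin n) ℂ) (hA : A.PosDef)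
    (b u : Fin n → ℂ) (σ : ℂ)
    (hσdef : σ = dotProduct (star u) (A⁻¹ *ᵥ b)) :
    ∀ θ : ℂ, ‖θ‖ = 1 →
      ((A + θ • Matrix.vecMulVec b (star u)
          + (starRingEnd ℂ θ) • (Matrix.vecMulVec b (star u))ᴴ).det).re ≤
      ((A + (starRingEnd ℂ σ / ((‖σ‖ : ℝ) : ℂ)) • Matrix.vecMulVec b (star u)
          + (starRingEnd ℂ (starRingEnd ℂ σ / ((‖σ‖ : ℝ) : ℂ))) •
              (Matrix.vecMulVec b (star u))ᴴ).det).re := by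
  intro θ hθ
  have hphase : ‖1 + θ * σ‖ ≤ ‖1 + (‖σ‖ : ℂ)‖ := by
    rw [← Complex.ofReal_one, ← Complex.ofReal_add, Complex.norm_of_nonneg (by positivity)]
    simpa [norm_mul, hθ] using norm_add_le 1 (θ * σ)
  simp only [hA.isHermitian.det_add_smul_vecMulVec_add_conj_smul_conjTranspose
      hA.det_pos.ne'.isUnit, Complex.re_mul_ofReal, ← hσdef, Complex.conj_div_norm_mul_self, hθ]
  gcongr ?_ * (?_ ^ 2 - ?_ ^ 2 * _)
  · exact (Complex.pos_iff.mp hA.det_pos).1.le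
  · exact mul_nonneg (hA.inv.posSemidef.re_dotProduct_nonneg u)
      (hA.inv.posSemidef.re_dotProduct_nonneg b)
  · exact Complex.norm_conj_div_norm_le_one σ

/-- Let `A ∈ ℂ^{n×n}` be Hermitian positive definite, `B = b uᴴ`, and
suppose `σ = uᴴ A⁻¹ b ≠ 0`. With `θ* = conj(σ)/|σ|`, for every `θ` with `|θ| = 1`,
`det(A + θ B + conj(θ) Bᴴ) ≤ det(A + θ* B + conj(θ*) Bᴴ)` (both determinants are real,
compared via their real parts). -/
theorem optimal_unit_phase_det {n : ℕ} (A : Matrix (Fin n) (Fin n) ℂ) (hA : A.PosDef)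
    (b u : Fin n → ℂ) (σ : ℂ)
    (hσdef : σ = dotProduct (star u) (A⁻¹ *ᵥ b)) (hσ : σ ≠ 0) :
    ∀ θ : ℂ, ‖θ‖ = 1 →
      ((A + θ • Matrix.vecMulVec b (star u)
          + (starRingEnd ℂ θ) • (Matrix.vecMulVec b (star u))ᴴ).det).re ≤
      ((A + (starRingEnd ℂ σ / ((‖σ‖ : ℝ) : ℂ)) • Matrix.vecMulVec b (star u)
          + (starRingEnd ℂ (starRingEnd ℂ σ / ((‖σ‖ : ℝ) : ℂ))) •
              (Matrix.vecMulVec b (star u))ᴴ).det).re :=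
  optimal_unit_phase_det_general A hA b u σ hσdef
end

section
/- Let ē ∈ ℝ^M and P > 0. Then there exists η ∈ ℝ such that Σ_{i=1}^M max(ē_i − η, 0) = P, and for any such η, the vector ẽ ∈ ℝ^M defined by ẽ_i = max(ē_i − η, 0) satisfies ẽ_i ≥ 0 for all i, Σ_i ẽ_i = P, and ‖ẽ − ē‖² ≤ ‖x − ē‖² for every x ∈ ℝ^M with x_i ≥ 0 for all i and Σ_i x_i = P. That is, the water-filling vector ẽ is the Euclidean projection of ē onto the scaled simplex {x ∈ ℝ^M : x ≥ 0, Σ_i x_i = P}. -/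
/-!
The water level `η` exists by the intermediate value theorem: `η ↦ ∑ i, max (ē i - η) 0` is
continuous, vanishes at `η = max ē` and is at least `P` at `η = min ē - P`.

For optimality, `ẽ i = max (ē i - η) 0` satisfies the variational inequality
`(ẽ i - ē i + η) (x i - ẽ i) ≥ 0` for every `x i ≥ 0` (the first factor vanishes where `ẽ i > 0`,
and is `η - ē i ≥ 0` where `ẽ i = 0`). Summing, the `η`-terms cancel because `∑ x = ∑ ẽ`, so
`⟪ẽ - ē, x - ẽ⟫ ≥ 0`, which is the projection inequality.
-/

open Finset

section WaterFilling

variable {ι : Type*} [Fintype ι]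

theorem continuous_sum_max_sub (e : ι → ℝ) :
    Continuous fun η : ℝ => ∑ i, max (e i - η) 0 :=
  continuous_finsetSum _ fun _ _ =>
    (continuous_const.sub continuous_id).max continuous_const

theorem exists_sum_max_sub_eq [Nonempty ι] (e : ι → ℝ) {P : ℝ} (hP : 0 ≤ P) :
    ∃ η : ℝ, ∑ i, max (e i - η) 0 = P := by
  obtain ⟨j, hj⟩ := Finite.exists_min e
  obtain ⟨k, hk⟩ := Finite.exists_max e
  have h_top : ∑ i, max (e i - e k) 0 = 0 :=
    sum_eq_zero fun i _ => max_eq_right (by linarith [hk i])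
  have h_bot : P ≤ ∑ i, max (e i - (e j - P)) 0 :=
    calc P = max (e j - (e j - P)) 0 := by rw [sub_sub_cancel, max_eq_left hP]
      _ ≤ ∑ i, max (e i - (e j - P)) 0 :=
        single_le_sum (f := fun i => max (e i - (e j - P)) 0)
          (fun i _ => le_max_right _ 0) (mem_univ j)
  obtain ⟨η, -, hη⟩ := intermediate_value_Icc' (by linarith [hj k])
    (continuous_sum_max_sub e).continuousOn (⟨h_top.symm ▸ hP, h_bot⟩ : P ∈ Set.Icc _ _)
  exact ⟨η, hη⟩

theorem sq_max_sub_sub_add_le (a η : ℝ) {x : ℝ} (hx : 0 ≤ x) :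
    (max (a - η) 0 - a) ^ 2 + 2 * η * (max (a - η) 0 - x) ≤ (x - a) ^ 2 := by
  rcases le_or_gt a η with h | h
  · rw [max_eq_right (by linarith)]
    nlinarith
  · rw [max_eq_left (sub_nonneg.mpr h.le)]
    nlinarith [sq_nonneg (x - (a - η))]

theorem sum_sq_max_sub_sub_le (e : ι → ℝ) {η : ℝ} {x : ι → ℝ} (hx : ∀ i, 0 ≤ x i)
    (hsum : ∑ i, x i = ∑ i, max (e i - η) 0) :
    ∑ i, (max (e i - η) 0 - e i) ^ 2 ≤ ∑ i, (x i - e i) ^ 2 := by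
  have h_cancel : ∑ i, 2 * η * (max (e i - η) 0 - x i) = 0 := by
    rw [← mul_sum, sum_sub_distrib, hsum, sub_self, mul_zero]
  calc ∑ i, (max (e i - η) 0 - e i) ^ 2
      = ∑ i, ((max (e i - η) 0 - e i) ^ 2 + 2 * η * (max (e i - η) 0 - x i)) := by
        rw [sum_add_distrib, h_cancel, add_zero]
    _ ≤ ∑ i, (x i - e i) ^ 2 :=
        sum_le_sum fun i _ => sq_max_sub_sub_add_le (e i) η (hx i)

end WaterFilling

/-- Water-filling: for `ē ∈ ℝ^M` and `P > 0` there exists `η ∈ ℝ` with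
`Σ_i max(ē_i − η, 0) = P`, and for any such `η` the vector `ẽ_i = max(ē_i − η, 0)` is the
Euclidean projection of `ē` onto the scaled simplex `{x : x ≥ 0, Σ x_i = P}`. -/
theorem waterfilling_projection {M : ℕ} (hM : 0 < M) (ebar : Fin M → ℝ)
    (P : ℝ) (hP : 0 < P) :
    (∃ η : ℝ, ∑ i, max (ebar i - η) 0 = P) ∧
    ∀ η : ℝ, (∑ i, max (ebar i - η) 0) = P →
      (∀ i, 0 ≤ max (ebar i - η) 0) ∧
      (∑ i, max (ebar i - η) 0) = P ∧
      ∀ x : Fin M → ℝ, (∀ i, 0 ≤ x i) → (∑ i, x i) = P →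
        ∑ i, (max (ebar i - η) 0 - ebar i) ^ 2 ≤ ∑ i, (x i - ebar i) ^ 2 := by
  have : Nonempty (Fin M) := ⟨⟨0, hM⟩⟩
  refine ⟨exists_sum_max_sub_eq ebar hP.le, fun η hη => ⟨fun i => le_max_right _ 0, hη, ?_⟩⟩
  intro x hx hxsum
  exact sum_sq_max_sub_sub_le ebar hx (hxsum.trans hη.symm)
end
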